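/- Let n = 2q be an even integer with q ≥ 1, and let ν be a Lévy measure on ℝ with ∫ |y|^k ν(dy) < ∞ for k = 2, …, n, satisfying assumption (R_α) for some α ∈ (0,2). For ε > 0 define m_k^ε := ∫_{{|y|≤ε}} y^k ν(dy) for k = 2, …, n, and let Λ̄_ε := min { ν̄(ℝ) : ν̄ a finite positive measure on ℝ with ∫ y^k ν̄(dy) = m_k^ε for k = 2, …, n }. Then there exist a constant C < ∞ and ε_0 > 0 such that Λ̄_ε ≤ C · ν({|y| > ε}) for all ε ∈ (0, ε_0); equivalently, limsup_{ε↓0} Λ̄_ε / ν({|y| > ε}) < ∞. -/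

import Mathlib

/-!
Write `m_k^ε = ∫_{|y| ≤ ε} y^k ν(dy)`. By Karamata's theorem, assumption `(R_α)` gives
`m_k^ε / (ε^k g(ε)) → Γ_k`, where `Γ_k` are the moments on `[-1, 1]` of the `α`-stable Lévy
measure with tail constants `c₊, c₋`. Every nonzero polynomial `∑_{k=2}^n λ_k u^k` that is
nonnegative on `[-1, 1]` vanishes only at finitely many points there, so it integrates strictly
positively against the stable measure: `Γ` lies in the interior of the cone of moment vectors of
discrete measures on `[-1, 1]`. Hence for small `ε` the normalized moments are moments of discrete
measures `μ_ε` of uniformly bounded mass `W`, and the image of `g(ε) μ_ε` under `u ↦ ε u` matches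
`m^ε` with mass at most `g(ε) W ≤ 2 W ν({|y| > ε}) / (c₊ + c₋)`.
-/

open MeasureTheory Filter Set Topology
open scoped ENNReal NNReal Matrix

/-- `Λ̄_ε`: the minimal total mass of a finite positive measure matching the moments
`m_k^ε = ∫_{|y|≤ε} y^k ν(dy)`, `k = 2,…,n`. -/
noncomputable def minIntensity (n : ℕ) (ν : Measure ℝ) (ε : ℝ) : ℝ≥0∞ :=
  sInf {m : ℝ≥0∞ | ∃ νb : Measure ℝ, IsFiniteMeasure νb ∧ νb Set.univ = m ∧
    ∀ k, 2 ≤ k → k ≤ n →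
      MeasureTheory.Integrable (fun y : ℝ => y ^ k) νb ∧
        (∫ y, y ^ k ∂νb) = ∫ y in {y : ℝ | |y| ≤ ε}, y ^ k ∂ν}

/-! ### Regular variation and Karamata's theorem -/

def IsRegularlyVaryingAtZero (g : ℝ → ℝ) (ρ : ℝ) : Prop :=
  ∀ c : ℝ, 0 < c → Tendsto (fun x => g (c * x) / g x) (𝓝[>] 0) (𝓝 (c ^ ρ))

lemma le_pow_mul_of_forall_half_le {g : ℝ → ℝ} {a M : ℝ} (hM : 0 ≤ M)
    (h : ∀ x ∈ Ioc 0 a, g (x / 2) ≤ M * g x) (j : ℕ) :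
    ∀ x ∈ Ioc 0 a, g (x / 2 ^ j) ≤ M ^ j * g x := by
  induction j with
  | zero => simp
  | succ j ih =>
    intro x hx
    have hxj : x / 2 ^ j ∈ Ioc 0 a :=
      ⟨by have := hx.1; positivity,
        (div_le_self hx.1.le (one_le_pow₀ one_le_two)).trans hx.2⟩
    calc g (x / 2 ^ (j + 1)) = g (x / 2 ^ j / 2) := by rw [pow_succ, div_div]
      _ ≤ M * g (x / 2 ^ j) := h _ hxj
      _ ≤ M * (M ^ j * g x) := mul_le_mul_of_nonneg_left (ih x hx) hM
      _ = M ^ (j + 1) * g x := by ring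

lemma eventually_le_mul_of_tendsto_div {F g : ℝ → ℝ} {l : Filter ℝ} {c K : ℝ}
    (hgpos : ∀ᶠ x in l, 0 < g x) (hF : Tendsto (fun x => F x / g x) l (𝓝 c)) (hcK : c < K) :
    ∀ᶠ x in l, F x ≤ K * g x := by
  filter_upwards [hF.eventually_lt_const hcK, hgpos] with x hx hgx
  exact (div_le_iff₀ hgx).mp hx.le

/-- A one-sided Potter bound, from iterating `g (x / 2) ≤ 2 ^ β g x` along dyadic scales. -/
theorem IsRegularlyVaryingAtZero.le_rpow_mul {g F : ℝ → ℝ} {α β c : ℝ}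
    (hg : IsRegularlyVaryingAtZero g (-α)) (hgpos : ∀ x, 0 < x → 0 < g x) (hαβ : α < β)
    (hβ : 0 ≤ β) (hF : AntitoneOn F (Ioi 0))
    (hFg : Tendsto (fun x => F x / g x) (𝓝[>] 0) (𝓝 c)) :
    ∃ C ε₁ : ℝ, 0 < ε₁ ∧ ∀ ε ∈ Ioc 0 ε₁, ∀ u ∈ Ioc (0 : ℝ) 1,
      F (ε * u) ≤ C * u ^ (-β) * g ε := by
  have hgpos' : ∀ᶠ x in 𝓝[>] (0 : ℝ), 0 < g x := eventually_nhdsWithin_of_forall hgpos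
  have hhalf : ∀ᶠ x in 𝓝[>] (0 : ℝ), g (x / 2) ≤ 2 ^ β * g x := by
    have h := eventually_le_mul_of_tendsto_div hgpos' (hg (1 / 2) one_half_pos)
      (K := 2 ^ β) (by
        rw [one_div, Real.inv_rpow zero_le_two, ← Real.rpow_neg zero_le_two, neg_neg]
        exact Real.rpow_lt_rpow_of_exponent_lt one_lt_two hαβ)
    simpa only [one_div_mul_eq_div] using h
  obtain ⟨ε₁, hε₁, hsub⟩ := mem_nhdsGT_iff_exists_Ioc_subset.mp (hhalf.and
    (eventually_le_mul_of_tendsto_div hgpos' hFg ((le_abs_self c).trans_lt (lt_add_one |c|))))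
  have hiter := le_pow_mul_of_forall_half_le (by positivity) fun x hx => (hsub hx).1
  refine ⟨(|c| + 1) * 2 ^ β, ε₁, hε₁, fun ε hε u hu => ?_⟩
  obtain ⟨j, hj, hj'⟩ := exists_nat_pow_near (one_le_inv₀ hu.1 |>.mpr hu.2) one_lt_two
  have hεj : ε / 2 ^ (j + 1) ∈ Ioc 0 ε₁ :=
    ⟨by have := hε.1; positivity, (div_le_self hε.1.le (one_le_pow₀ one_le_two)).trans hε.2⟩
  have hεju : ε / 2 ^ (j + 1) ≤ ε * u := by
    rw [div_le_iff₀ (by positivity), mul_assoc]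
    exact le_mul_of_one_le_right hε.1.le ((inv_le_iff_one_le_mul₀' hu.1).mp hj'.le)
  have hpow : ((2 : ℝ) ^ β) ^ (j + 1) ≤ 2 ^ β * u ^ (-β) := by
    rw [← Real.rpow_mul_natCast zero_le_two, mul_comm, Real.rpow_natCast_mul zero_le_two,
      Real.rpow_neg hu.1.le, ← Real.inv_rpow hu.1.le,
      ← Real.mul_rpow zero_le_two (inv_nonneg.mpr hu.1.le)]
    exact Real.rpow_le_rpow (by positivity) (by rw [pow_succ']; gcongr) hβ
  calc F (ε * u) ≤ F (ε / 2 ^ (j + 1)) := hF hεj.1 (hεj.1.trans_le hεju) hεju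
    _ ≤ (|c| + 1) * g (ε / 2 ^ (j + 1)) := (hsub hεj).2
    _ ≤ (|c| + 1) * ((2 ^ β) ^ (j + 1) * g ε) := by gcongr; exact hiter (j + 1) ε hε
    _ ≤ (|c| + 1) * (2 ^ β * u ^ (-β) * g ε) := by
        gcongr; exact (hgpos ε hε.1).le
    _ = (|c| + 1) * 2 ^ β * u ^ (-β) * g ε := by ring

lemma integral_rpow_sub_one_mul {p : ℝ} (hp : 0 < p) (y : ℝ) :
    ∫ t in (0 : ℝ)..y, p * t ^ (p - 1) = y ^ p := by
  rw [intervalIntegral.integral_const_mul, integral_rpow (Or.inl (by linarith)),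
    sub_add_cancel, Real.zero_rpow hp.ne', sub_zero]
  field_simp

lemma lintegral_Ioc_rpow_eq (ρ : Measure ℝ) {p : ℝ} (hp : 0 < p) (ε : ℝ) :
    ∫⁻ y in Ioc 0 ε, ENNReal.ofReal (y ^ p) ∂ρ =
      ∫⁻ t in Ioi 0, ρ (Ioc t ε) * ENNReal.ofReal (p * t ^ (p - 1)) := by
  have hlc := lintegral_comp_eq_lintegral_meas_lt_mul (ρ.restrict (Ioc 0 ε))
    (f := id) (g := fun t => p * t ^ (p - 1))
    (ae_restrict_of_forall_mem measurableSet_Ioc fun y hy => hy.1.le) aemeasurable_id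
    (fun t _ => (intervalIntegral.intervalIntegrable_rpow' (by linarith)).const_mul p)
    (ae_restrict_of_forall_mem measurableSet_Ioi fun t ht => by
      have : (0 : ℝ) < t := ht; positivity)
  simp only [id, integral_rpow_sub_one_mul hp] at hlc
  rw [hlc]
  refine setLIntegral_congr_fun measurableSet_Ioi fun t ht => ?_
  change ρ.restrict _ (Ioi t) * _ = _
  rw [Measure.restrict_apply measurableSet_Ioi, inter_comm, Ioc_inter_Ioi, max_eq_right ht.le]

lemma integral_Ioc_rpow_eq_integral_Ioi (ρ : Measure ℝ) {p ε : ℝ} (hp : 0 < p)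
    (hfin : ∀ t, 0 < t → ρ (Ioc t ε) ≠ ∞) :
    ∫ y in Ioc 0 ε, y ^ p ∂ρ = ∫ t in Ioi 0, (ρ (Ioc t ε)).toReal * (p * t ^ (p - 1)) := by
  have hmeas : Measurable fun t => (ρ (Ioc t ε)).toReal * (p * t ^ (p - 1)) :=
    (ENNReal.measurable_toReal.comp (Antitone.measurable fun a b hab =>
      measure_mono (Ioc_subset_Ioc_left hab))).mul (by fun_prop)
  rw [integral_eq_lintegral_of_nonneg_ae (ae_restrict_of_forall_mem measurableSet_Ioc
      fun y hy => Real.rpow_nonneg hy.1.le p) (by fun_prop),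
    integral_eq_lintegral_of_nonneg_ae (ae_restrict_of_forall_mem measurableSet_Ioi
      fun t (ht : 0 < t) => by positivity) hmeas.aestronglyMeasurable,
    lintegral_Ioc_rpow_eq ρ hp]
  congr 1
  refine setLIntegral_congr_fun measurableSet_Ioi fun t ht => ?_
  rw [ENNReal.ofReal_mul ENNReal.toReal_nonneg, ENNReal.ofReal_toReal (hfin t ht)]

lemma integral_Ioc_eq_mul_integral_comp_mul (f : ℝ → ℝ) {ε : ℝ} (hε : 0 < ε) :
    ∫ t in Ioc 0 ε, f t = ε * ∫ u in Ioc 0 1, f (ε * u) := by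
  rw [← intervalIntegral.integral_of_le hε.le, ← intervalIntegral.integral_of_le zero_le_one,
    intervalIntegral.integral_comp_mul_left _ hε.ne', mul_zero, mul_one, smul_eq_mul,
    mul_inv_cancel_left₀ hε.ne']

theorem integral_Ioc_rpow_eq (ρ : Measure ℝ) {p ε : ℝ} (hp : 0 < p) (hε : 0 < ε)
    (hfin : ∀ t, 0 < t → ρ (Ioc t ε) ≠ ∞) :
    ∫ y in Ioc 0 ε, y ^ p ∂ρ =
      ε ^ p * ∫ u in Ioc 0 1, (ρ (Ioc (ε * u) ε)).toReal * (p * u ^ (p - 1)) := by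
  have hvanish : ∀ t ∈ Ioi 0 \ Ioc 0 ε, (ρ (Ioc t ε)).toReal * (p * t ^ (p - 1)) = 0 :=
    fun t ht => by rw [Ioc_eq_empty fun h => ht.2 ⟨ht.1, h.le⟩]; simp
  rw [integral_Ioc_rpow_eq_integral_Ioi ρ hp hfin,
    setIntegral_eq_of_subset_of_forall_sdiff_eq_zero measurableSet_Ioi Ioc_subset_Ioi_self hvanish,
    integral_Ioc_eq_mul_integral_comp_mul _ hε, ← integral_const_mul, ← integral_const_mul]
  refine setIntegral_congr_fun measurableSet_Ioc fun u (hu : 0 < u ∧ u ≤ 1) => ?_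
  simp only [Real.mul_rpow hε.le hu.1.le, Real.rpow_sub_one hε.ne']
  field_simp

lemma integrableOn_Ioc_rpow {r : ℝ} (hr : -1 < r) :
    IntegrableOn (fun u : ℝ => u ^ r) (Ioc 0 1) :=
  (intervalIntegrable_iff_integrableOn_Ioc_of_le zero_le_one).mp
    (intervalIntegral.intervalIntegrable_rpow' hr)

lemma integral_Ioc_rpow {r : ℝ} (hr : -1 < r) :
    ∫ u in Ioc (0 : ℝ) 1, u ^ r = 1 / (r + 1) := by
  rw [← intervalIntegral.integral_of_le zero_le_one, integral_rpow (Or.inl hr), Real.one_rpow,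
    Real.zero_rpow (by linarith)]
  simp

lemma integral_Ioc_sub_mul_rpow {α p : ℝ} (c : ℝ) (hp : 0 < p) (hαp : α < p) :
    ∫ u in Ioc 0 1, (c * u ^ (-α) - c) * (p * u ^ (p - 1)) = c * α / (p - α) := by
  have hrw : EqOn (fun u => (c * u ^ (-α) - c) * (p * u ^ (p - 1)))
      (fun u => c * p * u ^ (p - α - 1) - c * p * u ^ (p - 1)) (Ioc 0 1) := fun u hu => by
    simp only
    rw [show p - α - 1 = -α + (p - 1) by ring, Real.rpow_add hu.1]
    ring
  rw [setIntegral_congr_fun measurableSet_Ioc hrw,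
    integral_sub ((integrableOn_Ioc_rpow (by linarith)).const_mul _)
      ((integrableOn_Ioc_rpow (by linarith)).const_mul _),
    integral_const_mul, integral_const_mul, integral_Ioc_rpow (by linarith),
    integral_Ioc_rpow (by linarith)]
  field_simp [(by linarith : p - α ≠ 0), hp.ne']
  ring

lemma IsRegularlyVaryingAtZero.tendsto_sub_div {g F : ℝ → ℝ} {α c u : ℝ}
    (hg : IsRegularlyVaryingAtZero g (-α)) (hgpos : ∀ x, 0 < x → 0 < g x)
    (hFg : Tendsto (fun x => F x / g x) (𝓝[>] 0) (𝓝 c)) (hu : 0 < u) :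
    Tendsto (fun ε => (F (ε * u) - F ε) / g ε) (𝓝[>] 0) (𝓝 (c * u ^ (-α) - c)) := by
  have hscale : Tendsto (fun ε => u * ε) (𝓝[>] 0) (𝓝[>] 0) :=
    tendsto_nhdsWithin_of_tendsto_nhds_of_eventually_within _
      (((continuous_const_mul u).tendsto' 0 0 (mul_zero u)).mono_left nhdsWithin_le_nhds)
      (eventually_nhdsWithin_of_forall fun ε (hε : 0 < ε) => mul_pos hu hε)
  refine (((hFg.comp hscale).mul (hg u hu)).sub hFg).congr' ?_
  filter_upwards [self_mem_nhdsWithin] with ε (hε : 0 < ε)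
  have := hgpos (u * ε) (mul_pos hu hε)
  have := hgpos ε hε
  simp only [Function.comp_apply, mul_comm ε u]
  field_simp

/-- Karamata's theorem, normalized to `(0, 1]`: dominated convergence, with Potter's bound as
the dominating function. -/
theorem tendsto_integral_sub_div_mul_rpow {g F : ℝ → ℝ} {α p c : ℝ}
    (hg : IsRegularlyVaryingAtZero g (-α)) (hgpos : ∀ x, 0 < x → 0 < g x) (hα : 0 < α)
    (hαp : α < p) (hF0 : ∀ x, 0 < x → 0 ≤ F x) (hF : AntitoneOn F (Ioi 0))
    (hFg : Tendsto (fun x => F x / g x) (𝓝[>] 0) (𝓝 c)) :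
    Tendsto (fun ε => ∫ u in Ioc 0 1, (F (ε * u) - F ε) / g ε * (p * u ^ (p - 1))) (𝓝[>] 0)
      (𝓝 (c * α / (p - α))) := by
  have hp : 0 < p := hα.trans hαp
  obtain ⟨C, ε₁, hε₁, hpotter⟩ :=
    hg.le_rpow_mul hgpos (β := (α + p) / 2) (by linarith) (by linarith) hF hFg
  rw [← integral_Ioc_sub_mul_rpow c hp hαp]
  refine tendsto_integral_filter_of_dominated_convergence
    (fun u => C * p * u ^ (p - (α + p) / 2 - 1)) ?_ ?_
    ((integrableOn_Ioc_rpow (by linarith)).const_mul _)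
    (ae_restrict_of_forall_mem measurableSet_Ioc fun u hu =>
      (hg.tendsto_sub_div hgpos hFg hu.1).mul_const _)
  · filter_upwards [self_mem_nhdsWithin] with ε (hε : 0 < ε)
    refine (((aemeasurable_restrict_of_antitoneOn measurableSet_Ioc ?_).sub_const _).div_const _
      |>.mul (by fun_prop)).aestronglyMeasurable
    exact fun a ha b hb hab => hF (mul_pos hε ha.1) (mul_pos hε hb.1) (by gcongr)
  · filter_upwards [Ioc_mem_nhdsGT hε₁] with ε hε
    refine ae_restrict_of_forall_mem measurableSet_Ioc fun u hu => ?_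
    have hmono : F ε ≤ F (ε * u) :=
      hF (mul_pos hε.1 hu.1) hε.1 (mul_le_of_le_one_right hε.1.le hu.2)
    have hgε := hgpos ε hε.1
    have hpu : 0 ≤ p * u ^ (p - 1) := by have := hu.1; positivity
    rw [Real.norm_of_nonneg (mul_nonneg (div_nonneg (sub_nonneg.mpr hmono) hgε.le) hpu)]
    calc (F (ε * u) - F ε) / g ε * (p * u ^ (p - 1))
        ≤ F (ε * u) / g ε * (p * u ^ (p - 1)) := by
          gcongr
          linarith [hF0 ε hε.1]
      _ ≤ C * u ^ (-((α + p) / 2)) * (p * u ^ (p - 1)) := by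
          gcongr
          exact (div_le_iff₀ hgε).mpr (hpotter ε hε u hu)
      _ = C * p * u ^ (p - (α + p) / 2 - 1) := by
          rw [show p - (α + p) / 2 - 1 = -((α + p) / 2) + (p - 1) by ring, Real.rpow_add hu.1]
          ring

lemma measure_Ioc_toReal_eq_sub {ρ : Measure ℝ} {a b : ℝ} (hab : a ≤ b) (ha : ρ (Ioi a) ≠ ∞) :
    (ρ (Ioc a b)).toReal = (ρ (Ioi a)).toReal - (ρ (Ioi b)).toReal := by
  rw [← Ioi_sdiff_Ioi, measure_sdiff (Ioi_subset_Ioi hab) measurableSet_Ioi.nullMeasurableSet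
      (measure_ne_top_of_subset (Ioi_subset_Ioi hab) ha),
    ENNReal.toReal_sub_of_le (measure_mono (Ioi_subset_Ioi hab)) ha]

/-- Karamata's theorem at `0`. -/
theorem tendsto_integral_Ioc_rpow_div {ρ : Measure ℝ} {g : ℝ → ℝ} {α p c : ℝ}
    (hg : IsRegularlyVaryingAtZero g (-α)) (hgpos : ∀ x, 0 < x → 0 < g x) (hα : 0 < α)
    (hαp : α < p) (hfin : ∀ x, 0 < x → ρ (Ioi x) ≠ ∞)
    (htail : Tendsto (fun x => (ρ (Ioi x)).toReal / g x) (𝓝[>] 0) (𝓝 c)) :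
    Tendsto (fun ε => (∫ y in Ioc 0 ε, y ^ p ∂ρ) / (ε ^ p * g ε)) (𝓝[>] 0)
      (𝓝 (c * α / (p - α))) := by
  refine (tendsto_integral_sub_div_mul_rpow hg hgpos hα hαp (fun x _ => ENNReal.toReal_nonneg)
    (fun x hx y _ hxy => ENNReal.toReal_mono (hfin x hx) (measure_mono (Ioi_subset_Ioi hxy)))
    htail).congr' ?_
  filter_upwards [self_mem_nhdsWithin] with ε (hε : 0 < ε)
  rw [integral_Ioc_rpow_eq ρ (hα.trans hαp) hε
      fun t ht => measure_ne_top_of_subset Ioc_subset_Ioi_self (hfin t ht),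
    mul_div_mul_left _ _ (Real.rpow_pos_of_pos hε p).ne', ← integral_div]
  refine setIntegral_congr_fun measurableSet_Ioc fun u hu => ?_
  rw [measure_Ioc_toReal_eq_sub (mul_le_of_le_one_right hε.le hu.2) (hfin _ (mul_pos hε hu.1))]
  ring

/-! ### Tails and truncated moments of a Lévy measure -/

lemma measure_lt_abs_ne_top {ν : Measure ℝ}
    (hν : ∫⁻ y, ENNReal.ofReal (min 1 (y ^ 2)) ∂ν < ⊤) {x : ℝ} (hx : 0 < x) :
    ν {y | x < |y|} ≠ ∞ := by
  have hx2 : ENNReal.ofReal (min 1 (x ^ 2)) ≠ 0 := (ENNReal.ofReal_pos.mpr (by positivity)).ne'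
  have hsub : {y | x < |y|} ⊆
      {y | ENNReal.ofReal (min 1 (x ^ 2)) ≤ ENNReal.ofReal (min 1 (y ^ 2))} :=
    fun y (hy : x < |y|) => by
      have : x ^ 2 ≤ y ^ 2 := by rw [← sq_abs y]; gcongr
      exact ENNReal.ofReal_le_ofReal (min_le_min_left 1 this)
  exact ne_top_of_le_ne_top (ENNReal.div_lt_top hν.ne hx2).ne
    ((measure_mono hsub).trans (meas_ge_le_lintegral_div (by fun_prop) hx2 ENNReal.ofReal_ne_top))

lemma measure_lt_abs_eq_add {ν : Measure ℝ} {x : ℝ} (hx : 0 ≤ x) :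
    ν {y | x < |y|} = ν (Ioi x) + ν (Iio (-x)) := by
  have hdisj : Disjoint (Ioi x) (Iio (-x)) :=
    disjoint_left.mpr fun y (h1 : x < y) (h2 : y < -x) => by linarith
  rw [← measure_union hdisj measurableSet_Iio]
  congr 1
  ext y
  simp only [mem_ofPred_eq, lt_abs, mem_union, mem_Ioi, mem_Iio, lt_neg]

lemma tendsto_measure_lt_abs_div {ν : Measure ℝ} {g : ℝ → ℝ} {cp cm : ℝ}
    (hfin : ∀ x, 0 < x → ν {y | x < |y|} ≠ ∞)
    (htailp : Tendsto (fun x => (ν (Ioi x)).toReal / g x) (𝓝[>] 0) (𝓝 cp))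
    (htailm : Tendsto (fun x => (ν (Iio (-x))).toReal / g x) (𝓝[>] 0) (𝓝 cm)) :
    Tendsto (fun x => (ν {y | x < |y|}).toReal / g x) (𝓝[>] 0) (𝓝 (cp + cm)) := by
  refine (htailp.add htailm).congr' ?_
  filter_upwards [self_mem_nhdsWithin] with x (hx : 0 < x)
  have := hfin x hx
  rw [measure_lt_abs_eq_add hx.le] at this ⊢
  rw [ENNReal.toReal_add (ENNReal.add_ne_top.mp this).1 (ENNReal.add_ne_top.mp this).2, add_div]

lemma integrable_pow_of_lintegral_lt_top {ν : Measure ℝ} {k : ℕ}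
    (h : ∫⁻ y, ENNReal.ofReal (|y| ^ k) ∂ν < ⊤) : Integrable (fun y => y ^ k) ν :=
  ⟨by fun_prop, (hasFiniteIntegral_iff_norm _).mpr (by simpa [norm_pow] using h)⟩

lemma setIntegral_Ioc_pow_map_neg (ν : Measure ℝ) (k : ℕ) (ε : ℝ) :
    ∫ y in Ioc 0 ε, y ^ k ∂(ν.map Neg.neg) = (-1) ^ k * ∫ y in Ico (-ε) 0, y ^ k ∂ν := by
  rw [setIntegral_map measurableSet_Ioc (by fun_prop) measurable_neg.aemeasurable,
    ← integral_const_mul]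
  simp only [neg_preimage, neg_Ioc, neg_zero]
  exact setIntegral_congr_fun measurableSet_Ico fun y _ => neg_pow y k

lemma setIntegral_abs_le_pow {ν : Measure ℝ} {k : ℕ} (hk : k ≠ 0)
    (hint : Integrable (fun y => y ^ k) ν) (ε : ℝ) :
    ∫ y in {y | |y| ≤ ε}, y ^ k ∂ν =
      ∫ y in Ioc 0 ε, y ^ k ∂ν + (-1) ^ k * ∫ y in Ioc 0 ε, y ^ k ∂(ν.map Neg.neg) := by
  have hsplit : Ico (-ε) 0 ∪ Ioc 0 ε ⊆ {y | |y| ≤ ε} := by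
    rintro y (hy | hy) <;> rw [mem_ofPred_eq, abs_le] <;> constructor <;> linarith [hy.1, hy.2]
  rw [setIntegral_Ioc_pow_map_neg, ← mul_assoc, ← mul_pow, neg_one_mul, neg_neg, one_pow, one_mul,
    add_comm, ← setIntegral_union ((Iic_disjoint_Ioc le_rfl).mono_left fun _ h => h.2.le)
      measurableSet_Ioc hint.integrableOn hint.integrableOn]
  refine setIntegral_eq_of_subset_of_forall_sdiff_eq_zero
    (measurableSet_le continuous_abs.measurable measurable_const) hsplit fun y ⟨hyε, hy⟩ => ?_
  rcases lt_trichotomy y 0 with h | rfl | h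
  · exact absurd (Or.inl ⟨(abs_le.mp hyε).1, h⟩) hy
  · exact zero_pow hk
  · exact absurd (Or.inr ⟨h, (abs_le.mp hyε).2⟩) hy

lemma tendsto_integral_Ioc_pow_div {ρ : Measure ℝ} {g : ℝ → ℝ} {α c : ℝ} {k : ℕ}
    (hg : IsRegularlyVaryingAtZero g (-α)) (hgpos : ∀ x, 0 < x → 0 < g x) (hα : 0 < α)
    (hαk : α < k) (hfin : ∀ x, 0 < x → ρ (Ioi x) ≠ ∞)
    (htail : Tendsto (fun x => (ρ (Ioi x)).toReal / g x) (𝓝[>] 0) (𝓝 c)) :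
    Tendsto (fun ε => (∫ y in Ioc 0 ε, y ^ k ∂ρ) / (ε ^ k * g ε)) (𝓝[>] 0)
      (𝓝 (c * α / (k - α))) := by
  simpa only [Real.rpow_natCast] using tendsto_integral_Ioc_rpow_div hg hgpos hα hαk hfin htail

lemma map_neg_apply_Ioi (ν : Measure ℝ) (x : ℝ) : ν.map Neg.neg (Ioi x) = ν (Iio (-x)) := by
  rw [Measure.map_apply measurable_neg measurableSet_Ioi, neg_preimage, neg_Ioi]

/-- The truncated moments `m_{j+2}^ε`, `j < d`, of `ν` divided by their order of magnitude
`ε^{j+2} g(ε)`. -/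
noncomputable def normalizedMoments (ν : Measure ℝ) (g : ℝ → ℝ) (d : ℕ) (ε : ℝ) : Fin d → ℝ :=
  fun j => (∫ y in {y | |y| ≤ ε}, y ^ ((j : ℕ) + 2) ∂ν) / (ε ^ ((j : ℕ) + 2) * g ε)

/-- The moments `∫_{[-1,1]} u^{j+2} ν_α(du)` of the `α`-stable Lévy measure
`ν_α(du) = α (c₊ 1_{u>0} + c₋ 1_{u<0}) |u|^{-1-α} du`. -/
noncomputable def stableMoments (α cp cm : ℝ) (d : ℕ) : Fin d → ℝ :=
  fun j => α * (cp + (-1) ^ (j : ℕ) * cm) / ((j : ℕ) + 2 - α)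

theorem tendsto_normalizedMoments {ν : Measure ℝ} {g : ℝ → ℝ} {α cp cm : ℝ} (d : ℕ)
    (hg : IsRegularlyVaryingAtZero g (-α)) (hgpos : ∀ x, 0 < x → 0 < g x) (hα0 : 0 < α)
    (hα2 : α < 2) (hint : ∀ j : Fin d, Integrable (fun y => y ^ ((j : ℕ) + 2)) ν)
    (hfinp : ∀ x, 0 < x → ν (Ioi x) ≠ ∞) (hfinm : ∀ x, 0 < x → ν (Iio (-x)) ≠ ∞)
    (htailp : Tendsto (fun x => (ν (Ioi x)).toReal / g x) (𝓝[>] 0) (𝓝 cp))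
    (htailm : Tendsto (fun x => (ν (Iio (-x))).toReal / g x) (𝓝[>] 0) (𝓝 cm)) :
    Tendsto (normalizedMoments ν g d) (𝓝[>] 0) (𝓝 (stableMoments α cp cm d)) := by
  refine tendsto_pi_nhds.mpr fun j => ?_
  have hαk : α < ((j : ℕ) + 2 : ℕ) := by
    push_cast
    linarith [(j : ℕ).cast_nonneg (α := ℝ)]
  have hpos := tendsto_integral_Ioc_pow_div hg hgpos hα0 hαk hfinp htailp
  have hneg := tendsto_integral_Ioc_pow_div (ρ := ν.map Neg.neg) hg hgpos hα0 hαk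
    (by simpa only [map_neg_apply_Ioi] using hfinm) (by simpa only [map_neg_apply_Ioi] using htailm)
  convert hpos.add (hneg.const_mul ((-1) ^ ((j : ℕ) + 2))) using 1
  · ext ε
    simp only [normalizedMoments, setIntegral_abs_le_pow (by omega) (hint j)]
    ring
  · simp only [stableMoments, pow_add, neg_one_sq]
    push_cast
    congr 1
    ring

/-! ### The moment cone -/

section DualCone

variable {E : Type*} [NormedAddCommGroup E] [NormedSpace ℝ E] [FiniteDimensional ℝ E]

/-- Compactness of the normalized dual cone turns pointwise positivity into a uniform margin
`m ≤ f x`, and then the whole ball of radius `m` around `x` cannot be separated from `K`. -/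
theorem PointedCone.mem_interior_closure_of_forall_dual_pos (K : PointedCone ℝ E) {x : E}
    (hx : ∀ f : StrongDual ℝ E, f ≠ 0 → (∀ y ∈ K, 0 ≤ f y) → 0 < f x) :
    x ∈ interior (closure (K : Set E)) := by
  set D : Set (StrongDual ℝ E) := Metric.sphere 0 1 ∩ ⋂ y ∈ K, {f | 0 ≤ f y}
  have hD : IsCompact D := (isCompact_sphere 0 1).inter_right <| isClosed_biInter fun y _ =>
    isClosed_le continuous_const (continuous_id.clm_apply continuous_const)
  have hmemD : ∀ f, f ∈ D ↔ ‖f‖ = 1 ∧ ∀ y ∈ K, 0 ≤ f y := fun f => by simp [D]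
  obtain ⟨m, hm, hmargin⟩ : ∃ m : ℝ, 0 < m ∧ ∀ f ∈ D, m ≤ f x := by
    rcases D.eq_empty_or_nonempty with hDe | hDne
    · exact ⟨1, one_pos, by simp [hDe]⟩
    obtain ⟨f₀, hf₀, hmin⟩ := hD.exists_isMinOn hDne
      (continuous_id.clm_apply continuous_const).continuousOn
    rw [hmemD] at hf₀
    exact ⟨f₀ x, hx f₀ (norm_ne_zero_iff.mp (hf₀.1.trans_ne one_ne_zero)) hf₀.2, hmin⟩
  refine mem_interior.mpr ⟨Metric.ball x m, fun y hy => ?_, Metric.isOpen_ball,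
    Metric.mem_ball_self hm⟩
  by_contra hyK
  obtain ⟨f, hfK, hfy⟩ := ProperCone.hyperplane_separation_point (Submodule.closure K)
    (x₀ := y) hyK
  have hnf : 0 < ‖f‖ := norm_pos_iff.mpr fun h => by simp [h] at hfy
  set f₁ := ‖f‖⁻¹ • f
  have hf₁D : f₁ ∈ D := (hmemD _).mpr
    ⟨by rw [norm_smul, norm_inv, norm_norm, inv_mul_cancel₀ hnf.ne'], fun z hz => by
      simpa [f₁] using mul_nonneg (inv_nonneg.mpr hnf.le) (hfK z (subset_closure hz))⟩
  have hf₁y : f₁ y < 0 := by simpa [f₁] using mul_neg_of_pos_of_neg (inv_pos.mpr hnf) hfy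
  have hf₁xy : f₁ x - f₁ y ≤ ‖x - y‖ := by
    rw [← map_sub]
    refine (le_abs_self _).trans ?_
    simpa [f₁, norm_smul, hnf.ne'] using f₁.le_opNorm (x - y)
  rw [Metric.mem_ball, dist_comm, dist_eq_norm] at hy
  linarith [hmargin f₁ hf₁D]

theorem PointedCone.mem_interior_of_forall_dual_pos (K : PointedCone ℝ E)
    (hK : (interior (K : Set E)).Nonempty) {x : E}
    (hx : ∀ f : StrongDual ℝ E, f ≠ 0 → (∀ y ∈ K, 0 ≤ f y) → 0 < f x) :
    x ∈ interior (K : Set E) :=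
  K.convex.interior_closure_eq_interior_of_nonempty_interior hK ▸
    K.mem_interior_closure_of_forall_dual_pos hx

end DualCone

/-- Index `j` stands for the moment of order `j + 2`. -/
def momentCurve (d : ℕ) (u : ℝ) : Fin d → ℝ := fun j => u ^ ((j : ℕ) + 2)

/-- Moment vectors of discrete measures on `[-1, 1]`. -/
def momentCone (d : ℕ) : PointedCone ℝ (Fin d → ℝ) :=
  PointedCone.hull ℝ (momentCurve d '' Icc (-1) 1)

noncomputable def nodes (d : ℕ) : Fin d → ℝ := fun i => 1 / ((i : ℕ) + 1)

lemma nodes_injective (d : ℕ) : Function.Injective (nodes d) := by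
  intro i j h
  simp only [nodes, one_div, inv_inj, add_left_inj, Nat.cast_inj] at h
  exact Fin.ext h

lemma nodes_mem_Icc {d : ℕ} (i : Fin d) : nodes d i ∈ Icc (-1) 1 := by
  have : (1 : ℝ) ≤ (i : ℕ) + 1 := by simp
  exact ⟨by unfold nodes; linarith [show 0 < 1 / ((i : ℕ) + 1 : ℝ) by positivity],
    div_le_one_of_le₀ this (by positivity)⟩

noncomputable def nodeMatrix (d : ℕ) : Matrix (Fin d) (Fin d) ℝ :=
  Matrix.of fun j i => momentCurve d (nodes d i) j

lemma nodeMatrix_mulVec (d : ℕ) (w : Fin d → ℝ) :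
    nodeMatrix d *ᵥ w = ∑ i, w i • momentCurve d (nodes d i) := by
  ext j
  simp [nodeMatrix, Matrix.mulVec, dotProduct, mul_comm]

lemma isUnit_det_nodeMatrix (d : ℕ) : IsUnit (nodeMatrix d).det := by
  have : nodeMatrix d =
      (Matrix.vandermonde (nodes d))ᵀ * Matrix.diagonal fun i => nodes d i ^ 2 := by
    ext j i
    simp [nodeMatrix, momentCurve, Matrix.vandermonde, pow_add]
  rw [this, Matrix.det_mul, Matrix.det_transpose, Matrix.det_diagonal, isUnit_iff_ne_zero]
  refine mul_ne_zero (Matrix.det_vandermonde_ne_zero_iff.mpr (nodes_injective d)) ?_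
  exact Finset.prod_ne_zero_iff.mpr fun i _ => by simp [nodes]; positivity

lemma nodeMatrix_mulVec_nonsing_inv_mulVec (d : ℕ) (x : Fin d → ℝ) :
    nodeMatrix d *ᵥ ((nodeMatrix d)⁻¹ *ᵥ x) = x := by
  rw [Matrix.mulVec_mulVec, Matrix.mul_nonsing_inv _ (isUnit_det_nodeMatrix d), Matrix.one_mulVec]

lemma nodeMatrix_mulVec_mem_momentCone {d : ℕ} {w : Fin d → ℝ} (hw : 0 ≤ w) :
    nodeMatrix d *ᵥ w ∈ momentCone d := by
  rw [nodeMatrix_mulVec]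
  exact Submodule.sum_mem _ fun i _ => (momentCone d).smul_mem (hw i)
    (Submodule.subset_span ⟨nodes d i, nodes_mem_Icc i, rfl⟩)

lemma nodeMatrix_mulVec_one_mem_interior (d : ℕ) :
    nodeMatrix d *ᵥ 1 ∈ interior (momentCone d : Set (Fin d → ℝ)) := by
  set A := nodeMatrix d
  have hopen : IsOpen {x : Fin d → ℝ | ∀ i, 0 < (A⁻¹ *ᵥ x) i} := by
    simp only [ofPred_forall]
    exact isOpen_iInter_of_finite fun i => isOpen_lt continuous_const
      ((continuous_apply i).comp (Continuous.matrix_mulVec continuous_const continuous_id))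
  refine mem_interior.mpr ⟨_, fun x hx => ?_, hopen, fun i => ?_⟩
  · rw [← nodeMatrix_mulVec_nonsing_inv_mulVec d x]
    exact nodeMatrix_mulVec_mem_momentCone fun i => (hx i).le
  · rw [Matrix.mulVec_mulVec, Matrix.nonsing_inv_mul _ (isUnit_det_nodeMatrix d),
      Matrix.one_mulVec]
    exact one_pos

lemma exists_linearCombination_eq_nodeMatrix_mulVec {d : ℕ} {w : Fin d → ℝ} (hw : 0 ≤ w) :
    ∃ l : ℝ →₀ ℝ≥0, Finsupp.linearCombination ℝ≥0 (momentCurve d) l = nodeMatrix d *ᵥ w ∧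
      l.sum (fun _ a => a) = ∑ i, (w i).toNNReal := by
  refine ⟨∑ i, Finsupp.single (nodes d i) (w i).toNNReal, ?_, ?_⟩
  · simp only [map_sum, Finsupp.linearCombination_single, NNReal.smul_def,
      Real.coe_toNNReal _ (hw _), nodeMatrix_mulVec]
  · rw [← Finsupp.sum_finsetSum_index (fun _ => rfl) fun _ _ _ => rfl]
    simp only [Finsupp.sum_single_index]

lemma setIntegral_pos_of_finite_zeros {f : ℝ → ℝ} {s : Set ℝ} (hs : MeasurableSet s)
    (hs0 : volume s ≠ 0) (hf : IntegrableOn f s) (hnn : ∀ x ∈ s, 0 ≤ f x)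
    (hz : (s ∩ {x | f x = 0}).Finite) : 0 < ∫ x in s, f x := by
  rw [setIntegral_pos_iff_support_of_nonneg_ae (ae_restrict_of_forall_mem hs hnn) hf]
  refine (pos_iff_ne_zero.mpr hs0).trans_le ?_
  rw [← measure_sdiff_null (hz.measure_zero volume)]
  exact measure_mono fun x hx => ⟨fun h => hx.2 ⟨hx.1, h⟩, hx.1⟩

lemma integral_Ioc_polynomial_mul_rpow {d : ℕ} (a : Fin d → ℝ) {α : ℝ} (hα2 : α < 2) (σ : ℝ) :
    IntegrableOn (fun x => (∑ j, a j * (σ * x) ^ ((j : ℕ) + 2)) * (α * x ^ (-α - 1))) (Ioc 0 1) ∧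
    ∫ x in Ioc 0 1, (∑ j, a j * (σ * x) ^ ((j : ℕ) + 2)) * (α * x ^ (-α - 1)) =
      ∑ j, a j * σ ^ ((j : ℕ) + 2) * (α / ((j : ℕ) + 2 - α)) := by
  have hr : ∀ j : Fin d, -1 < ((j : ℕ) : ℝ) + 1 - α := fun j => by
    linarith [(j : ℕ).cast_nonneg (α := ℝ)]
  have hEq : EqOn (fun x => (∑ j, a j * (σ * x) ^ ((j : ℕ) + 2)) * (α * x ^ (-α - 1)))
      (fun x => ∑ j, a j * σ ^ ((j : ℕ) + 2) * α * x ^ (((j : ℕ) : ℝ) + 1 - α)) (Ioc 0 1) := by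
    intro x hx
    simp only [Finset.sum_mul]
    refine Finset.sum_congr rfl fun j _ => ?_
    rw [show ((j : ℕ) : ℝ) + 1 - α = ((j + 2 : ℕ) : ℝ) + (-α - 1) by push_cast; ring,
      Real.rpow_add hx.1, Real.rpow_natCast, mul_pow]
    ring
  have hint : ∀ j : Fin d, IntegrableOn
      (fun x : ℝ => a j * σ ^ ((j : ℕ) + 2) * α * x ^ (((j : ℕ) : ℝ) + 1 - α)) (Ioc 0 1) :=
    fun j => (integrableOn_Ioc_rpow (hr j)).const_mul _
  refine ⟨(integrableOn_congr_fun hEq measurableSet_Ioc).mpr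
    (integrable_finsetSum _ fun j _ => hint j), ?_⟩
  rw [setIntegral_congr_fun measurableSet_Ioc hEq, integral_finsetSum _ fun j _ => hint j]
  refine Finset.sum_congr rfl fun j _ => ?_
  rw [integral_const_mul, integral_Ioc_rpow (hr j),
    show ((j : ℕ) : ℝ) + 1 - α + 1 = (j : ℕ) + 2 - α by ring]
  ring

lemma finite_setOf_sum_mul_pow_eq_zero {d : ℕ} {a : Fin d → ℝ} (ha : a ≠ 0) {σ : ℝ}
    (hσ : σ ≠ 0) : {x : ℝ | ∑ j, a j * (σ * x) ^ ((j : ℕ) + 2) = 0}.Finite := by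
  set P : Polynomial ℝ := ∑ j, Polynomial.C (a j) * Polynomial.X ^ ((j : ℕ) + 2)
  have hP : P ≠ 0 := by
    obtain ⟨j, hj⟩ := Function.ne_iff.mp ha
    have : P.coeff ((j : ℕ) + 2) = a j := by simp [P, Fin.val_inj]
    exact fun h => hj (by simpa [h] using this.symm)
  refine ((Polynomial.finite_setOfPred_isRoot hP).preimage
    (mul_right_injective₀ hσ).injOn).subset fun x (hx : _ = 0) => ?_
  simpa [P, Polynomial.eval_finsetSum] using hx

theorem sum_mul_stableMoments_pos {α cp cm : ℝ} {d : ℕ} (hα0 : 0 < α) (hα2 : α < 2)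
    (hcp : 0 ≤ cp) (hcm : 0 ≤ cm) (hcpm : 0 < cp + cm) {a : Fin d → ℝ} (ha : a ≠ 0)
    (hnn : ∀ u ∈ Icc (-1 : ℝ) 1, 0 ≤ ∑ j, a j * u ^ ((j : ℕ) + 2)) :
    0 < ∑ j, a j * stableMoments α cp cm d j := by
  have hside : ∀ σ : ℝ, σ = 1 ∨ σ = -1 →
      0 < ∫ x in Ioc 0 1, (∑ j, a j * (σ * x) ^ ((j : ℕ) + 2)) * (α * x ^ (-α - 1)) := by
    intro σ hσ
    have hσ0 : σ ≠ 0 := by rcases hσ with rfl | rfl <;> norm_num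
    have hσx : ∀ x ∈ Ioc (0 : ℝ) 1, σ * x ∈ Icc (-1) 1 := fun x hx => by
      rcases hσ with rfl | rfl <;> constructor <;> linarith [hx.1, hx.2]
    refine setIntegral_pos_of_finite_zeros measurableSet_Ioc (by simp)
      (integral_Ioc_polynomial_mul_rpow a hα2 σ).1
      (fun x hx => mul_nonneg (hnn _ (hσx x hx)) (by have := hx.1; positivity))
      ((finite_setOf_sum_mul_pow_eq_zero ha hσ0).subset ?_)
    rintro x ⟨hx, hx0 : _ = 0⟩
    exact (mul_eq_zero.mp hx0).resolve_right (by have := hx.1; positivity)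
  have hsum : ∑ j, a j * stableMoments α cp cm d j =
      cp * (∫ x in Ioc 0 1, (∑ j, a j * (1 * x) ^ ((j : ℕ) + 2)) * (α * x ^ (-α - 1))) +
      cm * (∫ x in Ioc 0 1, (∑ j, a j * (-1 * x) ^ ((j : ℕ) + 2)) * (α * x ^ (-α - 1))) := by
    rw [(integral_Ioc_polynomial_mul_rpow a hα2 1).2,
      (integral_Ioc_polynomial_mul_rpow a hα2 (-1)).2, Finset.mul_sum, Finset.mul_sum,
      ← Finset.sum_add_distrib]
    refine Finset.sum_congr rfl fun j _ => ?_
    simp only [stableMoments, one_pow, pow_add, neg_one_sq]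
    ring
  rw [hsum]
  have h1 := hside 1 (Or.inl rfl)
  have h2 := hside (-1) (Or.inr rfl)
  rcases hcp.lt_or_eq with hcp' | rfl
  · exact add_pos_of_pos_of_nonneg (mul_pos hcp' h1) (mul_nonneg hcm h2.le)
  · simpa using mul_pos (by linarith) h2

theorem stableMoments_mem_interior_momentCone {α cp cm : ℝ} (d : ℕ) (hα0 : 0 < α) (hα2 : α < 2)
    (hcp : 0 ≤ cp) (hcm : 0 ≤ cm) (hcpm : 0 < cp + cm) :
    stableMoments α cp cm d ∈ interior (momentCone d : Set (Fin d → ℝ)) := by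
  refine (momentCone d).mem_interior_of_forall_dual_pos ⟨_, nodeMatrix_mulVec_one_mem_interior d⟩
    fun f hf hfK => ?_
  set a : Fin d → ℝ := fun i => f fun j => if i = j then 1 else 0
  have hf_apply : ∀ y, f y = ∑ j, a j * y j := fun y => by
    rw [← f.coe_coe, LinearMap.pi_apply_eq_sum_univ]
    simp [a, mul_comm]
  rw [hf_apply]
  refine sum_mul_stableMoments_pos hα0 hα2 hcp hcm hcpm (fun ha => hf ?_) fun u hu => ?_
  · ext y
    simp [hf_apply, ha]
  · simpa [hf_apply, momentCurve] using hfK _ (Submodule.subset_span ⟨u, hu, rfl⟩)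

/-- Near an interior point `x` of the moment cone, moment vectors are realized by discrete
measures of uniformly bounded mass: `y = (x - η A 1) + A (η 1 + A⁻¹ (y - x))` and the weights
`η + (A⁻¹ (y - x))_i` stay in `[0, 2η]`. -/
theorem eventually_exists_linearCombination_eq_of_mem_interior {d : ℕ} {x : Fin d → ℝ}
    (hx : x ∈ interior (momentCone d : Set (Fin d → ℝ))) :
    ∃ W : ℝ≥0, ∀ᶠ y in 𝓝 x, ∃ l : ℝ →₀ ℝ≥0,
      Finsupp.linearCombination ℝ≥0 (momentCurve d) l = y ∧ l.sum (fun _ a => a) ≤ W := by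
  set A := nodeMatrix d
  obtain ⟨η, hη, hηx⟩ : ∃ η > (0 : ℝ), x - η • A *ᵥ 1 ∈ momentCone d := by
    have hcont : Tendsto (fun t : ℝ => x - t • A *ᵥ 1) (𝓝 0) (𝓝 x) := by
      have : Continuous fun t : ℝ => x - t • A *ᵥ 1 := by fun_prop
      simpa using this.tendsto 0
    obtain ⟨η, hη, h⟩ := (hcont.eventually (isOpen_interior.mem_nhds hx)).exists_gt
    exact ⟨η, hη, interior_subset h⟩
  obtain ⟨l₀, -, hl₀ : Finsupp.linearCombination ℝ≥0 (momentCurve d) l₀ = x - η • A *ᵥ 1⟩ :=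
    (Finsupp.mem_span_image_iff_linearCombination ℝ≥0).mp hηx
  refine ⟨l₀.sum (fun _ a => a) + d * (2 * η).toNNReal, ?_⟩
  have hβ : Tendsto (fun y => A⁻¹ *ᵥ (y - x)) (𝓝 x) (𝓝 0) := by
    have : Continuous fun y => A⁻¹ *ᵥ (y - x) := by fun_prop
    simpa using this.tendsto x
  filter_upwards [eventually_all.mpr fun j =>
    (tendsto_pi_nhds.mp hβ j).eventually (Ioo_mem_nhds (neg_neg_of_pos hη) hη)] with y hy
  obtain ⟨l₁, hl₁, hl₁_sum⟩ := exists_linearCombination_eq_nodeMatrix_mulVec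
    (w := η • 1 + A⁻¹ *ᵥ (y - x)) fun i => by simp; linarith [(hy i).1]
  refine ⟨l₀ + l₁, ?_, ?_⟩
  · rw [map_add, hl₀, hl₁, Matrix.mulVec_add, Matrix.mulVec_smul,
      nodeMatrix_mulVec_nonsing_inv_mulVec]
    abel
  · rw [Finsupp.sum_add_index' (fun _ => rfl) fun _ _ _ => rfl, hl₁_sum]
    gcongr
    calc ∑ i, ((η • (1 : Fin d → ℝ) + A⁻¹ *ᵥ (y - x)) i).toNNReal
        ≤ ∑ _i : Fin d, (2 * η).toNNReal :=
          Finset.sum_le_sum fun i _ => Real.toNNReal_le_toNNReal (by simp; linarith [(hy i).2])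
      _ = d * (2 * η).toNNReal := by simp

/-! ### Moment-matching measures -/

lemma minIntensity_le_sum {n : ℕ} {ν : Measure ℝ} {ε : ℝ} {ι : Type*} (s : Finset ι)
    (a : ι → ℝ≥0) (x : ι → ℝ)
    (h : ∀ k, 2 ≤ k → k ≤ n → ∑ i ∈ s, (a i : ℝ) * x i ^ k = ∫ y in {y | |y| ≤ ε}, y ^ k ∂ν) :
    minIntensity n ν ε ≤ ∑ i ∈ s, (a i : ℝ≥0∞) := by
  set μ : Measure ℝ := ∑ i ∈ s, (a i : ℝ≥0∞) • Measure.dirac (x i)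
  have hμ : μ univ = ∑ i ∈ s, (a i : ℝ≥0∞) := by simp [μ, Measure.finsetSum_apply]
  have hint : ∀ k : ℕ, ∀ i ∈ s,
      Integrable (fun y : ℝ => y ^ k) ((a i : ℝ≥0∞) • Measure.dirac (x i)) :=
    fun k i _ => (integrable_dirac enorm_lt_top).smul_measure ENNReal.coe_ne_top
  refine sInf_le ⟨μ, ⟨hμ ▸ ENNReal.sum_lt_top.mpr fun i _ => ENNReal.coe_lt_top⟩, hμ,
    fun k hk hkn => ⟨integrable_finsetSum_measure.mpr (hint k), ?_⟩⟩
  rw [integral_finsetSum_measure (hint k), ← h k hk hkn]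
  simp [NNReal.smul_def]

lemma linearCombination_momentCurve_apply {d : ℕ} (l : ℝ →₀ ℝ≥0) (j : Fin d) :
    Finsupp.linearCombination ℝ≥0 (momentCurve d) l j =
      ∑ u ∈ l.support, (l u : ℝ) * u ^ ((j : ℕ) + 2) := by
  simp [Finsupp.linearCombination_apply, Finsupp.sum, NNReal.smul_def, momentCurve]

/-- Rescaling a discrete measure with the normalized moments by `ε` in space and by `g ε` in mass
matches the truncated moments of `ν`. -/
theorem minIntensity_le_of_linearCombination_eq {n : ℕ} {ν : Measure ℝ} {g : ℝ → ℝ} {ε : ℝ}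
    {W : ℝ≥0} (hε : 0 < ε) (hg : 0 < g ε) {l : ℝ →₀ ℝ≥0}
    (hl : Finsupp.linearCombination ℝ≥0 (momentCurve (n - 1)) l = normalizedMoments ν g (n - 1) ε)
    (hlW : l.sum (fun _ a => a) ≤ W) :
    minIntensity n ν ε ≤ ENNReal.ofReal (g ε * W) := by
  refine (minIntensity_le_sum l.support (fun u => (g ε).toNNReal * l u) (fun u => ε * u)
    fun k hk hkn => ?_).trans ?_
  · have hk_moment := congrFun hl ⟨k - 2, by omega⟩
    rw [linearCombination_momentCurve_apply] at hk_moment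
    simp only [normalizedMoments, show k - 2 + 2 = k by omega] at hk_moment
    rw [eq_div_iff (by positivity)] at hk_moment
    rw [← hk_moment, Finset.sum_mul]
    refine Finset.sum_congr rfl fun u _ => ?_
    rw [NNReal.coe_mul, Real.coe_toNNReal _ hg.le, mul_pow]
    ring
  · rw [ENNReal.ofReal_mul hg.le, ENNReal.ofReal_coe_nnreal]
    simp only [ENNReal.coe_mul, ← Finset.mul_sum, ENNReal.ofReal]
    gcongr
    exact_mod_cast hlW

theorem stmt_17_general (n : ℕ) (ν : Measure ℝ)
    (hνloc : (∫⁻ y, ENNReal.ofReal (min 1 (y ^ 2)) ∂ν) < ⊤)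
    (hmom : ∀ k, 2 ≤ k → k ≤ n → (∫⁻ y, ENNReal.ofReal (|y| ^ k) ∂ν) < ⊤)
    (α : ℝ) (hα0 : 0 < α) (hα2 : α < 2)
    (cp cm : ℝ) (hcp : 0 ≤ cp) (hcm : 0 ≤ cm) (hcpm : 0 < cp + cm)
    (g : ℝ → ℝ) (hgpos : ∀ x, 0 < x → 0 < g x)
    (hgRV : ∀ c : ℝ, 0 < c → Filter.Tendsto (fun x => g (c * x) / g x)
      (nhdsWithin 0 (Set.Ioi 0)) (nhds (c ^ (-α))))
    (htailp : Filter.Tendsto (fun x => (ν (Set.Ioi x)).toReal / g x)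
      (nhdsWithin 0 (Set.Ioi 0)) (nhds cp))
    (htailm : Filter.Tendsto (fun x => (ν (Set.Iio (-x))).toReal / g x)
      (nhdsWithin 0 (Set.Ioi 0)) (nhds cm)) :
    ∃ C : ℝ, ∃ ε₀ : ℝ, 0 < ε₀ ∧ ∀ ε, 0 < ε → ε < ε₀ →
      minIntensity n ν ε ≤ ENNReal.ofReal C * ν {y : ℝ | ε < |y|} := by
  have hfin (x : ℝ) (hx : 0 < x) := measure_lt_abs_ne_top hνloc hx
  have hfin_sides (x : ℝ) (hx : 0 < x) :=
    ENNReal.add_ne_top.mp (measure_lt_abs_eq_add (ν := ν) hx.le ▸ hfin x hx)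
  obtain ⟨W, hW⟩ := eventually_exists_linearCombination_eq_of_mem_interior
    (stableMoments_mem_interior_momentCone (n - 1) hα0 hα2 hcp hcm hcpm)
  have hmoments := (tendsto_normalizedMoments (n - 1) hgRV hgpos hα0 hα2
    (fun j => integrable_pow_of_lintegral_lt_top (hmom _ le_add_self (by have := j.isLt; omega)))
    (fun x hx => (hfin_sides x hx).1) (fun x hx => (hfin_sides x hx).2) htailp htailm).eventually hW
  have htail := (tendsto_measure_lt_abs_div hfin htailp htailm).eventually_const_le
    (half_lt_self hcpm)
  obtain ⟨ε₀, hε₀, hsub⟩ := mem_nhdsGT_iff_exists_Ioc_subset.mp (hmoments.and htail)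
  refine ⟨2 * W / (cp + cm), ε₀, hε₀, fun ε hε hεε₀ => ?_⟩
  obtain ⟨⟨l, hl, hlW⟩, hεtail⟩ := hsub ⟨hε, hεε₀.le⟩
  rw [le_div_iff₀ (hgpos ε hε)] at hεtail
  refine (minIntensity_le_of_linearCombination_eq hε (hgpos ε hε) hl hlW).trans ?_
  rw [← ENNReal.ofReal_toReal (hfin ε hε), ← ENNReal.ofReal_mul (by positivity)]
  refine ENNReal.ofReal_le_ofReal ?_
  calc g ε * W = 2 * W / (cp + cm) * ((cp + cm) / 2 * g ε) := by field_simp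
    _ ≤ 2 * W / (cp + cm) * (ν {y | ε < |y|}).toReal := by gcongr

/-- For `n = 2q` even and a Lévy measure `ν` satisfying assumption `(R_α)`,
the minimal intensity `Λ̄_ε` of the moment-matching problem for the small jumps satisfies
`Λ̄_ε ≤ C ν({|y| > ε})` for all sufficiently small `ε > 0`. -/
theorem stmt_17 (q : ℕ) (hq : 1 ≤ q) (n : ℕ) (hn : n = 2 * q) (ν : Measure ℝ)
    (hν0 : ν {0} = 0) (hνloc : (∫⁻ y, ENNReal.ofReal (min 1 (y ^ 2)) ∂ν) < ⊤)
    (hmom : ∀ k, 2 ≤ k → k ≤ n → (∫⁻ y, ENNReal.ofReal (|y| ^ k) ∂ν) < ⊤)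
    (α : ℝ) (hα0 : 0 < α) (hα2 : α < 2)
    (cp cm : ℝ) (hcp : 0 ≤ cp) (hcm : 0 ≤ cm) (hcpm : 0 < cp + cm)
    (g : ℝ → ℝ) (hgpos : ∀ x, 0 < x → 0 < g x)
    (hgRV : ∀ c : ℝ, 0 < c → Filter.Tendsto (fun x => g (c * x) / g x)
      (nhdsWithin 0 (Set.Ioi 0)) (nhds (c ^ (-α))))
    (htailp : Filter.Tendsto (fun x => (ν (Set.Ioi x)).toReal / g x)
      (nhdsWithin 0 (Set.Ioi 0)) (nhds cp))
    (htailm : Filter.Tendsto (fun x => (ν (Set.Iio (-x))).toReal / g x)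
      (nhdsWithin 0 (Set.Ioi 0)) (nhds cm)) :
    ∃ C : ℝ, ∃ ε₀ : ℝ, 0 < ε₀ ∧ ∀ ε, 0 < ε → ε < ε₀ →
      minIntensity n ν ε ≤ ENNReal.ofReal C * ν {y : ℝ | ε < |y|} :=
  stmt_17_general n ν hνloc hmom α hα0 hα2 cp cm hcp hcm hcpm g hgpos hgRV htailp htailm
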